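/- The number of 3-2-1-avoiding permutations of [n] equals the Catalan number C_n = binomial(2n,n)/(n+1). -/

import Mathlib

/-!
A 321-avoiding permutation `π` is determined by its prefix-maximum function `M`: at the
left-to-right maxima of `M` the permutation takes the value `M i`, and at the other positions it
takes the remaining values in increasing order, since a descent there together with the earlier
maximum would form a 3-2-1 pattern. Conversely, for every monotone `M` with `i ≤ M i`, filling the
positions this way gives a 321-avoiding permutation with prefix maxima `M`; a pigeonhole argument
shows that the filled values stay below `M`. These staircase functions are counted by the Catalan
numbers: splitting at the first fixed point gives `C (n + 1) = ∑ j, C j * C (n - j)`.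
-/

def Avoids321 {n : ℕ} (π : Equiv.Perm (Fin n)) : Prop :=
  ¬ ∃ i j k : Fin n, i < j ∧ j < k ∧ π k < π j ∧ π j < π i

open Finset Function

lemma Finset.exists_orderEmbOfFin_eq {α : Type*} [LinearOrder α] {s : Finset α} {k : ℕ}
    (h : s.card = k) {a : α} (ha : a ∈ s) : ∃ x, s.orderEmbOfFin h x = a := by
  rw [← Set.mem_range, range_orderEmbOfFin]
  exact ha

section PrefixMax

variable {α β : Type*} [LinearOrder α] [LinearOrder β]

def IsLRMax (p : α → β) (i : α) : Prop := ∀ j < i, p j < p i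

lemma injOn_isLRMax (p : α → β) : Set.InjOn p {i | IsLRMax p i} := by
  intro i hi j hj hij
  by_contra hne
  rcases lt_or_gt_of_ne hne with h | h
  · exact (hj i h).ne hij
  · exact (hi j h).ne hij.symm

lemma exists_isLRMax_le [WellFoundedLT α] {m : α → β} (hm : Monotone m) (i : α) :
    ∃ j ≤ i, IsLRMax m j ∧ m j = m i := by
  induction i using WellFoundedLT.induction with
  | ind i ih =>
    by_cases hi : IsLRMax m i
    · exact ⟨i, le_rfl, hi, rfl⟩
    · simp only [IsLRMax, not_forall, not_lt] at hi
      obtain ⟨j, hji, hij⟩ := hi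
      obtain ⟨k, hkj, hk, hkm⟩ := ih j hji
      exact ⟨k, hkj.trans hji.le, hk, hkm.trans (le_antisymm (hm hji.le) hij)⟩

variable [LocallyFiniteOrderBot α]

def prefixMax (p : α → β) (i : α) : β := (Iic i).sup' nonempty_Iic p

variable {p : α → β} {i j : α}

lemma le_prefixMax (h : j ≤ i) : p j ≤ prefixMax p i := le_sup' p (mem_Iic.2 h)

lemma prefixMax_le_iff {b : β} : prefixMax p i ≤ b ↔ ∀ j ≤ i, p j ≤ b := by
  simp [prefixMax]

lemma monotone_prefixMax : Monotone (prefixMax p) :=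
  fun _ _ h => prefixMax_le_iff.2 fun _ hj => le_prefixMax (hj.trans h)

lemma exists_le_apply_eq_prefixMax (p : α → β) (i : α) : ∃ j ≤ i, p j = prefixMax p i := by
  obtain ⟨j, hj, h⟩ := exists_mem_eq_sup' nonempty_Iic p
  exact ⟨j, mem_Iic.1 hj, h.symm⟩

lemma apply_eq_prefixMax_of_isLRMax (hi : IsLRMax (prefixMax p) i) : p i = prefixMax p i := by
  obtain ⟨j, hji, hj⟩ := exists_le_apply_eq_prefixMax p i
  obtain rfl | hlt := hji.eq_or_lt
  · exact hj
  · exact absurd (hi j hlt) (not_lt.2 (hj ▸ le_prefixMax le_rfl))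

lemma apply_lt_prefixMax_of_not_isLRMax (hp : Injective p) (hi : ¬IsLRMax (prefixMax p) i) :
    p i < prefixMax p i := by
  simp only [IsLRMax, not_forall, not_lt] at hi
  obtain ⟨j, hji, hij⟩ := hi
  obtain ⟨k, hkj, hk⟩ := exists_le_apply_eq_prefixMax p j
  refine (le_prefixMax le_rfl).lt_of_ne fun h => (hkj.trans_lt hji).ne (hp ?_).symm
  rw [h, ← le_antisymm (monotone_prefixMax hji.le) hij, hk]

end PrefixMax

lemma le_prefixMax_self {n : ℕ} {p : Fin n → Fin n} (hp : Injective p) (i : Fin n) :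
    i ≤ prefixMax p i := by
  have := card_le_card_of_injOn p (s := Finset.Iic i) (t := Finset.Iic (prefixMax p i))
    (fun j hj => mem_Iic.2 (le_prefixMax (mem_Iic.1 hj))) hp.injOn
  rw [Fin.card_Iic, Fin.card_Iic] at this
  exact Fin.le_def.2 (by omega)

lemma Avoids321.apply_lt_apply {n : ℕ} {π : Equiv.Perm (Fin n)} (hπ : Avoids321 π)
    {j k : Fin n} (hjk : j < k) (hj : π j < prefixMax π j) : π j < π k := by
  obtain ⟨i, hij, hi⟩ := exists_le_apply_eq_prefixMax π j
  refine lt_of_not_ge fun hkj => hπ ⟨i, j, k, ?_, hjk, ?_, hi ▸ hj⟩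
  · exact hij.lt_of_ne fun h => (h ▸ hi ▸ hj).false
  · exact hkj.lt_of_ne (π.injective.ne hjk.ne')

section LRMaxes

variable {n : ℕ} (m : Fin n → Fin n)

def lrMaxes : Finset (Fin n) := {i | ∀ j < i, m j < m i}

lemma mem_lrMaxes {i : Fin n} : i ∈ lrMaxes m ↔ IsLRMax m i := by simp [lrMaxes, IsLRMax]

lemma card_compl_image_lrMaxes : ((lrMaxes m).image m)ᶜ.card = (lrMaxes m)ᶜ.card := by
  rw [card_compl, card_compl, card_image_of_injOn]
  exact (injOn_isLRMax m).mono fun i hi => (mem_lrMaxes m).1 hi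

end LRMaxes

-- The prefix-maximum functions of permutations of `Fin n` (the paper's LRmax specifications).
abbrev Staircase (n : ℕ) : Type := {f : Fin n → Fin n // Monotone f ∧ ∀ i, i ≤ f i}

namespace Staircase

variable {n : ℕ}

lemma val_le_val (f : Staircase n) {a b : Fin n} (h : (a : ℕ) ≤ b) : (f.1 a : ℕ) ≤ f.1 b :=
  f.2.1 h

lemma le_val (f : Staircase n) (a : Fin n) : (a : ℕ) ≤ f.1 a := f.2.2 a

lemma apply_last_eq (f : Staircase (n + 1)) : f.1 (Fin.last n) = Fin.last n :=
  le_antisymm (Fin.le_last _) (f.2.2 _)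

def firstFix (f : Staircase (n + 1)) : Fin (n + 1) :=
  (univ.filter fun i => f.1 i = i).min'
    (filter_nonempty_iff.2 ⟨_, mem_univ _, f.apply_last_eq⟩)

lemma firstFix_eq_iff {f : Staircase (n + 1)} {j : Fin (n + 1)} :
    firstFix f = j ↔ f.1 j = j ∧ ∀ i < j, i < f.1 i := by
  have mem_iff (i) : i ∈ univ.filter (fun i => f.1 i = i) ↔ f.1 i = i := by simp
  constructor
  · rintro rfl
    refine ⟨(mem_iff _).1 (min'_mem _ _), fun i hi => (f.2.2 i).lt_of_ne fun hfi => ?_⟩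
    exact (min'_le _ _ ((mem_iff i).2 hfi.symm)).not_gt hi
  · rintro ⟨hj, hlt⟩
    refine le_antisymm (min'_le _ _ ((mem_iff j).2 hj)) (le_min' _ _ _ fun i hi => ?_)
    exact not_lt.1 fun hij => (hlt i hij).ne ((mem_iff i).1 hi).symm

def glue (j : Fin (n + 1)) (g : Staircase j) (h : Staircase (n - j)) : Staircase (n + 1) := by
  refine ⟨fun i =>
    if hi : (i : ℕ) < j then ⟨g.1 ⟨i, hi⟩ + 1, by grind⟩
    else if hij : (i : ℕ) = j then j
    else ⟨h.1 ⟨i - j - 1, by omega⟩ + j + 1, by grind⟩, ?_, ?_⟩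
  · intro a b hab
    simp only [Fin.le_def] at hab ⊢
    split_ifs <;> first
      | grind
      | exact Nat.add_le_add_right (g.2.1 hab) 1
      | exact Nat.add_le_add_right
          (Nat.add_le_add_right (h.val_le_val (by simp only; omega)) _) _
  · intro a
    simp only [Fin.le_def]
    split_ifs <;> grind [val_le_val, le_val]

variable {j : Fin (n + 1)} {g : Staircase j} {h : Staircase (n - j)} {i : Fin (n + 1)}

lemma glue_val_of_lt (hi : (i : ℕ) < j) : ((glue j g h).1 i : ℕ) = g.1 ⟨i, hi⟩ + 1 := by
  simp only [glue]
  rw [dif_pos hi]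

lemma glue_apply_self : (glue j g h).1 j = j := by
  simp [glue]

lemma glue_val_of_gt (hi : (j : ℕ) < i) :
    ((glue j g h).1 i : ℕ) = h.1 ⟨i - j - 1, by omega⟩ + j + 1 := by
  simp only [glue]
  rw [dif_neg hi.not_gt, dif_neg hi.ne']

lemma firstFix_glue : firstFix (glue j g h) = j :=
  firstFix_eq_iff.2 ⟨glue_apply_self, fun i hi => by
    rw [Fin.lt_def, glue_val_of_lt hi]
    exact Nat.lt_succ_of_le (g.le_val ⟨i, hi⟩)⟩

def lower (f : Staircase (n + 1)) (j : Fin (n + 1)) (hj : f.1 j = j)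
    (hlt : ∀ i < j, i < f.1 i) : Staircase j := by
  have lt_val (i : Fin j) : (i : ℕ) < f.1 (Fin.castLE j.isLt.le i) :=
    hlt (Fin.castLE j.isLt.le i) i.isLt
  refine ⟨fun i => ⟨f.1 (Fin.castLE j.isLt.le i) - 1, ?_⟩, fun a b hab => ?_, fun a => ?_⟩
  · have := f.val_le_val (a := Fin.castLE j.isLt.le i) (b := j) i.isLt.le
    rw [hj] at this
    have := lt_val i
    omega
  · exact Nat.sub_le_sub_right (f.val_le_val (a := Fin.castLE _ a) (b := Fin.castLE _ b) hab) 1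
  · exact Nat.le_sub_one_of_lt (lt_val a)

def upper (f : Staircase (n + 1)) (j : Fin (n + 1)) : Staircase (n - j) := by
  refine ⟨fun i => ⟨f.1 ⟨j + 1 + i, by omega⟩ - (j + 1), ?_⟩,
    fun a b hab => ?_, fun a => ?_⟩
  · have := (f.1 ⟨j + 1 + i, by omega⟩).isLt
    have := i.isLt
    omega
  · exact Nat.sub_le_sub_right (f.val_le_val (Nat.add_le_add_left hab _)) _
  · exact Nat.le_sub_of_add_le' (f.le_val ⟨j + 1 + a, by omega⟩)

lemma glue_lower_upper {f : Staircase (n + 1)} (hj : f.1 j = j) (hlt : ∀ i < j, i < f.1 i) :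
    glue j (lower f j hj hlt) (upper f j) = f := by
  refine Subtype.ext (funext fun i => Fin.ext ?_)
  rcases lt_trichotomy (i : ℕ) j with hi | hi | hi
  · have := Fin.lt_def.1 (hlt i hi)
    rw [glue_val_of_lt hi]
    show (f.1 (Fin.castLE _ ⟨i, hi⟩) : ℕ) - 1 + 1 = f.1 i
    rw [show Fin.castLE _ ⟨i, hi⟩ = i from rfl]
    omega
  · rw [Fin.ext hi, glue_apply_self, hj]
  · rw [glue_val_of_gt hi]
    have := f.le_val i
    simp only [upper]
    grind

lemma lower_glue :
    lower (glue j g h) j glue_apply_self (firstFix_eq_iff.1 firstFix_glue).2 = g := by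
  refine Subtype.ext (funext fun i => Fin.ext ?_)
  simp [lower, glue_val_of_lt (i := Fin.castLE j.isLt.le i) i.isLt]

lemma upper_glue : upper (glue j g h) j = h := by
  refine Subtype.ext (funext fun i => Fin.ext ?_)
  simp only [upper]
  rw [glue_val_of_gt (by simp only; omega), Nat.add_assoc, Nat.add_sub_cancel]
  exact congrArg (fun x => (h.1 x : ℕ)) (Fin.ext (by simp only; omega))

def fiberEquiv (j : Fin (n + 1)) :
    {f : Staircase (n + 1) // firstFix f = j} ≃ Staircase j × Staircase (n - j) where
  toFun f := (lower f.1 j (firstFix_eq_iff.1 f.2).1 (firstFix_eq_iff.1 f.2).2, upper f.1 j)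
  invFun gh := ⟨glue j gh.1 gh.2, firstFix_glue⟩
  left_inv f :=
    Subtype.ext (glue_lower_upper (firstFix_eq_iff.1 f.2).1 (firstFix_eq_iff.1 f.2).2)
  right_inv _ := Prod.ext lower_glue upper_glue

lemma card_succ (n : ℕ) : Nat.card (Staircase (n + 1)) =
    ∑ j : Fin (n + 1), Nat.card (Staircase j) * Nat.card (Staircase (n - j)) := by
  rw [← Nat.card_congr (Equiv.sigmaFiberEquiv firstFix), Nat.card_sigma]
  simp only [Nat.card_congr (fiberEquiv _), Nat.card_prod]

theorem card_eq_catalan (n : ℕ) : Nat.card (Staircase n) = catalan n := by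
  induction n using Nat.strong_induction_on with
  | _ n ih =>
    cases n with
    | zero =>
      rw [catalan_zero, Nat.card_eq_one_iff_unique]
      exact ⟨inferInstance, ⟨⟨finZeroElim, fun a => a.elim0, fun a => a.elim0⟩⟩⟩
    | succ n =>
      rw [card_succ, catalan_succ]
      exact sum_congr rfl fun j _ => by rw [ih _ (by omega), ih _ (by omega)]

end Staircase

namespace LRMaxFill

variable {n : ℕ} (m : Fin n → Fin n)

/-- Keeps the values of `m` at its left-to-right maxima and fills the remaining positions
increasingly with the remaining values. -/
noncomputable def fill (i : Fin n) : Fin n :=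
  if hi : i ∈ lrMaxes m then m i
  else ((lrMaxes m).image m)ᶜ.orderEmbOfFin (card_compl_image_lrMaxes m)
    (((lrMaxes m)ᶜ.orderIsoOfFin rfl).symm ⟨i, mem_compl.2 hi⟩)

variable {m}

lemma fill_of_mem {i : Fin n} (hi : i ∈ lrMaxes m) : fill m i = m i := dif_pos hi

lemma fill_orderEmbOfFin (x : Fin (lrMaxes m)ᶜ.card) :
    fill m ((lrMaxes m)ᶜ.orderEmbOfFin rfl x) =
      ((lrMaxes m).image m)ᶜ.orderEmbOfFin (card_compl_image_lrMaxes m) x := by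
  have hx := (lrMaxes m)ᶜ.orderEmbOfFin_mem rfl x
  rw [fill, dif_neg (mem_compl.1 hx)]
  congr
  rw [OrderIso.symm_apply_eq]
  exact Subtype.ext rfl

lemma fill_not_mem_image {i : Fin n} (hi : i ∉ lrMaxes m) : fill m i ∉ (lrMaxes m).image m := by
  obtain ⟨x, rfl⟩ := exists_orderEmbOfFin_eq rfl (mem_compl.2 hi)
  rw [fill_orderEmbOfFin]
  exact mem_compl.1 (orderEmbOfFin_mem _ _ x)

lemma fill_lt_fill_iff {i j : Fin n} (hi : i ∉ lrMaxes m) (hj : j ∉ lrMaxes m) :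
    fill m i < fill m j ↔ i < j := by
  obtain ⟨x, rfl⟩ := exists_orderEmbOfFin_eq rfl (mem_compl.2 hi)
  obtain ⟨y, rfl⟩ := exists_orderEmbOfFin_eq rfl (mem_compl.2 hj)
  simp only [fill_orderEmbOfFin, OrderEmbedding.lt_iff_lt]

lemma injective_fill (m : Fin n → Fin n) : Injective (fill m) := by
  intro i j hij
  by_cases hi : i ∈ lrMaxes m <;> by_cases hj : j ∈ lrMaxes m
  · rw [fill_of_mem hi, fill_of_mem hj] at hij
    exact injOn_isLRMax m ((mem_lrMaxes m).1 hi) ((mem_lrMaxes m).1 hj) hij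
  · exact absurd (hij ▸ fill_of_mem hi ▸ mem_image_of_mem m hi) (fill_not_mem_image hj)
  · exact absurd (hij ▸ fill_of_mem hj ▸ mem_image_of_mem m hj) (fill_not_mem_image hi)
  · by_contra hne
    rcases lt_or_gt_of_ne hne with h | h
    · exact ((fill_lt_fill_iff hi hj).2 h).ne hij
    · exact ((fill_lt_fill_iff hj hi).2 h).ne hij.symm

noncomputable def fillPerm (m : Fin n → Fin n) : Equiv.Perm (Fin n) :=
  Equiv.ofBijective (fill m) (Finite.injective_iff_bijective.1 (injective_fill m))

/-- If `m i ≤ fill m i`, then every value below `m i` is taken by `fill m` at a position before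
`i` other than the left-to-right maximum where `m` first reaches `m i`; there are too few of
these. -/
lemma fill_lt (hm : Monotone m) (hge : ∀ i, i ≤ m i) {i : Fin n} (hi : i ∉ lrMaxes m) :
    fill m i < m i := by
  by_contra! hle
  obtain ⟨j, hji, hj, hjm⟩ := exists_isLRMax_le hm i
  have hj' := (mem_lrMaxes m).2 hj
  have hji : j < i := hji.lt_of_ne (by rintro rfl; exact hi hj')
  have hmaps : Set.MapsTo (fillPerm m).symm (Iio (m i)) ((Iio i).erase j) := by
    intro v hv
    set k := (fillPerm m).symm v
    have hk : fill m k = v := (fillPerm m).apply_symm_apply v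
    rw [coe_Iio, Set.mem_Iio] at hv
    rw [mem_coe, mem_erase, mem_Iio]
    by_cases hkm : k ∈ lrMaxes m
    · rw [fill_of_mem hkm] at hk
      have : k < j := hm.reflect_lt (hk ▸ hjm ▸ hv)
      exact ⟨this.ne, this.trans hji⟩
    · exact ⟨fun h => hkm (h ▸ hj'), (fill_lt_fill_iff hkm hi).1 (hk ▸ hv.trans_le hle)⟩
  have := card_le_card_of_injOn _ hmaps (fillPerm m).symm.injective.injOn
  rw [Fin.card_Iio, card_erase_of_mem (mem_Iio.2 hji), Fin.card_Iio] at this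
  have := Fin.le_def.1 (hge i)
  omega

lemma fill_le (hm : Monotone m) (hge : ∀ i, i ≤ m i) (i : Fin n) : fill m i ≤ m i := by
  by_cases hi : i ∈ lrMaxes m
  · exact (fill_of_mem hi).le
  · exact (fill_lt hm hge hi).le

lemma prefixMax_fill (hm : Monotone m) (hge : ∀ i, i ≤ m i) : prefixMax (fill m) = m := by
  funext i
  refine le_antisymm (prefixMax_le_iff.2 fun j hj => (fill_le hm hge j).trans (hm hj)) ?_
  obtain ⟨j, hji, hj, hjm⟩ := exists_isLRMax_le hm i
  exact hjm ▸ fill_of_mem ((mem_lrMaxes m).2 hj) ▸ le_prefixMax hji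

lemma avoids321_fillPerm (hm : Monotone m) (hge : ∀ i, i ≤ m i) : Avoids321 (fillPerm m) := by
  rintro ⟨i, j, k, hij, hjk, hkj, hji⟩
  change fill m k < fill m j at hkj
  change fill m j < fill m i at hji
  have not_mem {a b : Fin n} (hab : a < b) (hba : fill m b < fill m a) : b ∉ lrMaxes m := by
    intro hb
    have := prefixMax_fill hm hge ▸ le_prefixMax (p := fill m) hab.le
    exact (hba.trans_le (fill_of_mem hb ▸ this)).false
  exact hkj.not_gt ((fill_lt_fill_iff (not_mem hij hji) (not_mem hjk hkj)).2 hjk)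

lemma fill_prefixMax {π : Equiv.Perm (Fin n)} (hπ : Avoids321 π) : fill (prefixMax π) = π := by
  set M := prefixMax π
  have hmax {i : Fin n} (hi : i ∈ lrMaxes M) : π i = M i :=
    apply_eq_prefixMax_of_isLRMax ((mem_lrMaxes M).1 hi)
  have hlt {i : Fin n} (hi : i ∉ lrMaxes M) : π i < M i :=
    apply_lt_prefixMax_of_not_isLRMax π.injective (mt (mem_lrMaxes M).2 hi)
  have hmono : StrictMono (π ∘ (lrMaxes M)ᶜ.orderEmbOfFin rfl) := fun x y hxy =>
    hπ.apply_lt_apply ((OrderEmbedding.lt_iff_lt _).2 hxy)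
      (hlt (mem_compl.1 (orderEmbOfFin_mem _ _ x)))
  have hmem (x) : π ((lrMaxes M)ᶜ.orderEmbOfFin rfl x) ∈ ((lrMaxes M).image M)ᶜ := by
    refine mem_compl.2 fun h => ?_
    obtain ⟨r, hr, hrx⟩ := mem_image.1 h
    rw [← hmax hr] at hrx
    exact mem_compl.1 (orderEmbOfFin_mem _ _ x) (π.injective hrx ▸ hr)
  have hcompl := orderEmbOfFin_unique (card_compl_image_lrMaxes M) hmem hmono
  funext i
  by_cases hi : i ∈ lrMaxes M
  · rw [fill_of_mem hi, hmax hi]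
  · obtain ⟨x, rfl⟩ := exists_orderEmbOfFin_eq rfl (mem_compl.2 hi)
    rw [fill_orderEmbOfFin]
    exact (congrFun hcompl x).symm

end LRMaxFill

open LRMaxFill in
noncomputable def avoids321EquivStaircase (n : ℕ) :
    {π : Equiv.Perm (Fin n) // Avoids321 π} ≃ Staircase n where
  toFun π := ⟨prefixMax π.1, monotone_prefixMax, le_prefixMax_self π.1.injective⟩
  invFun m := ⟨fillPerm m.1, avoids321_fillPerm m.2.1 m.2.2⟩
  left_inv π := Subtype.ext (Equiv.ext (congrFun (fill_prefixMax π.2)))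
  right_inv m := Subtype.ext (prefixMax_fill m.2.1 m.2.2)

theorem stmt16 (n : ℕ) :
    Nat.card {π : Equiv.Perm (Fin n) // Avoids321 π} =
      Nat.choose (2 * n) n / (n + 1) := by
  rw [Nat.card_congr (avoids321EquivStaircase n), Staircase.card_eq_catalan,
    catalan_eq_centralBinom_div, Nat.centralBinom]
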